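/- arXiv:2004.07986 — 2 statements merged into one kernel-verified Lean document; each statement's English description precedes it below -/
import Mathlib

section
/- Let $M \in \mathbb{R}^{n\times(k+1)}$ be a matrix of rank $k$. Choose $P \subseteq [k+1]$ and $Q \subseteq [n]$ with $|P| = |Q| = k$ maximizing $|\det(M_P^Q)|$ (the determinant of the submatrix with columns in $P$ and rows in $Q$). Then for the unique index $i \in [k+1] \setminus P$, the linear system $M_P x = M_i$ has a unique solution $x \in \mathbb{R}^k$, and this solution satisfies $\|x\|_\infty \leq 1$. -/
/-!
Since `M` has rank `k` it has a nonzero `k × k` minor, so by maximality `det M_P^Q ≠ 0`. Hence the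
columns `M_P` are independent, and as `rank M = k` they span the column space: the system
`M_P x = M_i` has exactly one solution. By Cramer's rule `x_j · det M_P^Q` is the minor obtained by
replacing column `P j` with column `i`; this is again a `k × k` minor of `M`, so its absolute value
is at most `|det M_P^Q|`.
-/

open Function Matrix Module Submodule

theorem Function.Injective.update_of_notMem_range {α β : Type*} [DecidableEq α] {f : α → β}
    (hf : Injective f) (a : α) {b : β} (hb : b ∉ Set.range f) : Injective (update f a b) := by
  intro x y h
  simp only [update_apply] at h
  split_ifs at h with hx hy hy
  · rw [hx, hy]
  · exact absurd ⟨y, h.symm⟩ hb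
  · exact absurd ⟨x, h⟩ hb
  · exact hf h

theorem exists_linearIndependent_comp_fin {K V ι : Type*} [DivisionRing K] [AddCommGroup V]
    [Module K V] [Finite ι] (v : ι → V) {k : ℕ} (hk : finrank K (span K (Set.range v)) = k) :
    ∃ f : Fin k → ι, Injective f ∧ LinearIndependent K (v ∘ f) := by
  obtain ⟨κ, a, ha, hspan, hli⟩ := exists_linearIndependent' K v
  have : Finite κ := Finite.of_injective a ha
  have : Fintype κ := Fintype.ofFinite κ
  have hcard : Fintype.card κ = k := by rw [← hk, ← hspan, finrank_span_eq_card hli]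
  let e : Fin k ≃ κ := (Fintype.equivFinOfCardEq hcard).symm
  exact ⟨a ∘ e, ha.comp e.injective, hli.comp e e.injective⟩

namespace Matrix

variable {m n p K : Type*}

theorem det_updateCol_mulVec {R : Type*} [CommRing R] [Fintype n] [DecidableEq n]
    (A : Matrix n n R) (j : n) (x : n → R) : (A.updateCol j (A *ᵥ x)).det = x j * A.det := by
  have : A *ᵥ x = fun k ↦ ∑ i, x i • A k i := by
    ext k; simp only [mulVec, dotProduct, smul_eq_mul, mul_comm]
  rw [this, det_updateCol_sum, smul_eq_mul]

theorem abs_le_one_of_abs_det_updateCol_mulVec_le [Fintype n] [DecidableEq n] [Field K]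
    [LinearOrder K] [IsStrictOrderedRing K] {A : Matrix n n K} (hA : A.det ≠ 0) {x : n → K}
    {j : n} (h : |(A.updateCol j (A *ᵥ x)).det| ≤ |A.det|) : |x j| ≤ 1 := by
  rw [det_updateCol_mulVec, abs_mul] at h
  exact le_of_mul_le_mul_right (by simpa using h) (abs_pos.mpr hA)

theorem updateCol_submatrix_eq_submatrix_update [DecidableEq p] (M : Matrix m n K) (r : p → m)
    (c : p → n) (j : p) (i : n) : (M.submatrix r c).updateCol j (fun a ↦ M (r a) i) =
      M.submatrix r (update c j i) := by
  ext a b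
  simp only [updateCol_apply, submatrix_apply, update_apply]
  split_ifs <;> rfl

variable [Field K]

theorem mulVec_injective_of_det_submatrix_ne_zero [Fintype n] [DecidableEq n]
    {N : Matrix m n K} {r : n → m} (h : (N.submatrix r id).det ≠ 0) : Injective N.mulVec := by
  intro x y hxy
  have hsub := mulVec_injective_of_isUnit ((isUnit_iff_isUnit_det _).mpr h.isUnit)
  exact hsub (funext fun a ↦ congrFun hxy (r a))

theorem exists_submatrix_det_ne_zero_of_rank_eq [Fintype m] [Fintype n] {M : Matrix m n K}
    {k : ℕ} (h : M.rank = k) :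
    ∃ r : Fin k → m, ∃ c : Fin k → n, Injective r ∧ Injective c ∧ (M.submatrix r c).det ≠ 0 := by
  obtain ⟨c, hc, hcols⟩ :=
    exists_linearIndependent_comp_fin M.col (M.rank_eq_finrank_span_cols.symm.trans h)
  have hN : (M.submatrix id c).rank = k := by
    rw [rank_eq_finrank_span_cols]
    exact (finrank_span_eq_card hcols).trans (Fintype.card_fin k)
  obtain ⟨r, hr, hrows⟩ := exists_linearIndependent_comp_fin (M.submatrix id c).row
    ((M.submatrix id c).rank_eq_finrank_span_row.symm.trans hN)
  refine ⟨r, c, hr, hc, ?_⟩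
  rw [← isUnit_iff_ne_zero, ← isUnit_iff_isUnit_det, ← linearIndependent_rows_iff_isUnit]
  exact hrows

theorem exists_mulVec_submatrix_eq_col [Fintype n] [Fintype p] {M : Matrix m n K} {c : p → n}
    (hc : Injective (M.submatrix id c).mulVec) (hrank : M.rank = Fintype.card p) (i : n) :
    ∃ x, M.submatrix id c *ᵥ x = M.col i := by
  have := FiniteDimensional.span_of_finite K (Set.finite_range M.col)
  have hle : span K (Set.range (M.submatrix id c).col) ≤ span K (Set.range M.col) :=
    span_mono (Set.range_comp_subset_range c M.col)
  have hspan := eq_of_le_of_finrank_eq hle <| by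
    rw [finrank_span_eq_card (mulVec_injective_iff.mp hc), ← rank_eq_finrank_span_cols, hrank]
  have hi : M.col i ∈ LinearMap.range (M.submatrix id c).mulVecLin := by
    rw [range_mulVecLin, hspan]
    exact subset_span ⟨i, rfl⟩
  exact hi

end Matrix

theorem stmt0_general (n k : ℕ) (M : Matrix (Fin n) (Fin (k + 1)) ℝ)
    (hrank : M.rank = k)
    (P : Fin k → Fin (k + 1)) (hP : Function.Injective P)
    (Q : Fin k → Fin n) (hQ : Function.Injective Q)
    (hmax : ∀ (P' : Fin k → Fin (k + 1)) (Q' : Fin k → Fin n),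
      Function.Injective P' → Function.Injective Q' →
      |(M.submatrix Q' P').det| ≤ |(M.submatrix Q P).det|)
    (i : Fin (k + 1)) (hi : i ∉ Set.range P) :
    ∃ x : Fin k → ℝ,
      (∀ r : Fin n, ∑ j, M r (P j) * x j = M r i) ∧
      (∀ j, |x j| ≤ 1) ∧
      (∀ y : Fin k → ℝ, (∀ r : Fin n, ∑ j, M r (P j) * y j = M r i) → y = x) := by
  obtain ⟨Q₀, P₀, hQ₀, hP₀, hdet₀⟩ := exists_submatrix_det_ne_zero_of_rank_eq hrank
  have hdet : (M.submatrix Q P).det ≠ 0 := by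
    intro h
    have hle := hmax P₀ Q₀ hP₀ hQ₀
    rw [h, abs_zero] at hle
    exact hdet₀ (abs_nonpos_iff.mp hle)
  have hinj : Injective (M.submatrix id P).mulVec :=
    mulVec_injective_of_det_submatrix_ne_zero (r := Q) hdet
  obtain ⟨x, hx⟩ := exists_mulVec_submatrix_eq_col hinj (hrank.trans (Fintype.card_fin k).symm) i
  refine ⟨x, congrFun hx, fun j ↦ ?_, fun y hy ↦ hinj (hx ▸ funext hy)⟩
  have hQx : M.submatrix Q P *ᵥ x = fun a ↦ M (Q a) i := funext fun a ↦ congrFun hx (Q a)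
  refine abs_le_one_of_abs_det_updateCol_mulVec_le hdet ?_
  rw [hQx, updateCol_submatrix_eq_submatrix_update]
  exact hmax _ _ (hP.update_of_notMem_range j hi) hQ

/-- Cramer's rule bound: columns of a maximum-volume submatrix fit the remaining
column with coefficients of absolute value at most 1, and the solution is unique. -/
theorem stmt0 (n k : ℕ) (hk : 0 < k) (M : Matrix (Fin n) (Fin (k + 1)) ℝ)
    (hrank : M.rank = k)
    (P : Fin k → Fin (k + 1)) (hP : Function.Injective P)
    (Q : Fin k → Fin n) (hQ : Function.Injective Q)
    (hmax : ∀ (P' : Fin k → Fin (k + 1)) (Q' : Fin k → Fin n),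
      Function.Injective P' → Function.Injective Q' →
      |(M.submatrix Q' P').det| ≤ |(M.submatrix Q P).det|)
    (i : Fin (k + 1)) (hi : i ∉ Set.range P) :
    ∃ x : Fin k → ℝ,
      (∀ r : Fin n, ∑ j, M r (P j) * x j = M r i) ∧
      (∀ j, |x j| ≤ 1) ∧
      (∀ y : Fin k → ℝ, (∀ r : Fin n, ∑ j, M r (P j) * y j = M r i) → y = x) :=
  stmt0_general n k M hrank P hP Q hQ hmax i hi
end

section
/- Let $X \sim C(0,1)$ be a standard Cauchy random variable. Then for all real $x \geq 1$ and $y > 0$, $\Pr[|X| \in (x, 4x] \text{ and } |X| \notin [y-x, y+x]] \geq \frac{0.1}{\pi}\cdot\frac{\ln 4}{x}$. -/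
/-- The standard Cauchy distribution, as a measure on ℝ with density 1/(π(1+z²)). -/
noncomputable def cauchyMeasure : MeasureTheory.Measure ℝ :=
  MeasureTheory.volume.withDensity (fun z => ENNReal.ofReal (1 / (Real.pi * (1 + z ^ 2))))

open Real MeasureTheory Set intervalIntegral in
lemma cauchy_density_cont : Continuous (fun z : ℝ => 1 / (Real.pi * (1 + z ^ 2))) := by
  apply continuous_const.div (by fun_prop)
  intro z
  have := Real.pi_pos
  positivity

open Real MeasureTheory Set in
lemma cauchy_Ioo (a b : ℝ) (hab : a ≤ b) :
    cauchyMeasure (Set.Ioo a b)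
      = ENNReal.ofReal ((Real.arctan b - Real.arctan a) / Real.pi) := by
  have hπ := Real.pi_pos
  rw [cauchyMeasure, withDensity_apply _ measurableSet_Ioo,
    ← ofReal_integral_eq_lintegral_ofReal]
  · congr 1
    rw [← integral_Ioc_eq_integral_Ioo, ← intervalIntegral.integral_of_le hab]
    have : ∀ z : ℝ, 1 / (Real.pi * (1 + z ^ 2)) = (1 / Real.pi) * (1 / (1 + z ^ 2)) := by
      intro z; rw [one_div_mul_eq_div, div_div, mul_comm]
    rw [intervalIntegral.integral_congr (g := fun z => (1 / Real.pi) * (1 / (1 + z ^ 2)))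
      (fun z _ => this z), intervalIntegral.integral_const_mul, integral_one_div_one_add_sq]
    ring
  · exact (cauchy_density_cont.continuousOn.integrableOn_Icc).mono_set Set.Ioo_subset_Icc_self
  · filter_upwards with z
    have := Real.pi_pos
    positivity

open Real MeasureTheory Set in
lemma cauchy_pair (a b : ℝ) (h0 : 0 ≤ a) (hab : a ≤ b) :
    ENNReal.ofReal (2 * (Real.arctan b - Real.arctan a) / Real.pi)
      ≤ cauchyMeasure (Set.Ioo a b ∪ Set.Ioo (-b) (-a)) := by
  have hπ := Real.pi_pos
  have hmono : Real.arctan a ≤ Real.arctan b := Real.arctan_strictMono.monotone hab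
  have hdisj : Disjoint (Set.Ioo a b) (Set.Ioo (-b) (-a)) := by
    rw [Set.disjoint_left]
    rintro z ⟨h1, h2⟩ ⟨h3, h4⟩
    linarith
  rw [measure_union hdisj measurableSet_Ioo, cauchy_Ioo a b hab,
    cauchy_Ioo (-b) (-a) (by linarith), Real.arctan_neg, Real.arctan_neg,
    ← ENNReal.ofReal_add (div_nonneg (by linarith) hπ.le) (div_nonneg (by linarith) hπ.le)]
  apply ENNReal.ofReal_le_ofReal
  apply le_of_eq
  ring

open Real in
lemma cauchy_density_cont_aux : Continuous (fun z : ℝ => 1 / (1 + z ^ 2)) := by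
  apply continuous_const.div (by fun_prop)
  intro z; positivity

open Real in
/-- Mean-value style step bound for arctan. -/
lemma arctan_step (p q : ℝ) (h0 : 0 ≤ p) (hpq : p ≤ q) :
    (q - p) / (1 + q ^ 2) ≤ Real.arctan q - Real.arctan p := by
  rw [← integral_one_div_one_add_sq (a := p) (b := q)]
  have h1 : (q - p) / (1 + q ^ 2) = ∫ _ in p..q, 1 / (1 + q ^ 2) := by
    rw [intervalIntegral.integral_const, smul_eq_mul]
    ring
  rw [h1]
  apply intervalIntegral.integral_mono_on hpq intervalIntegrable_const
  · exact cauchy_density_cont_aux.intervalIntegrable p q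
  · intro t ht
    have h2 : (0:ℝ) < 1 + t ^ 2 := by positivity
    apply one_div_le_one_div_of_le h2
    nlinarith [ht.1, ht.2]

open Real in
/-- arctan increments are antitone under right shifts. -/
lemma arctan_shift (u v s : ℝ) (h0 : 0 ≤ u) (huv : u ≤ v) (hs : 0 ≤ s) :
    Real.arctan (v + s) - Real.arctan (u + s) ≤ Real.arctan v - Real.arctan u := by
  rw [← integral_one_div_one_add_sq (a := u) (b := v)]
  have hL : Real.arctan (v + s) - Real.arctan (u + s)
      = ∫ t in u..v, 1 / (1 + (t + s) ^ 2) := by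
    rw [intervalIntegral.integral_comp_add_right (fun t => 1 / (1 + t ^ 2)) s,
      integral_one_div_one_add_sq]
  rw [hL]
  apply intervalIntegral.integral_mono_on huv
  · exact (cauchy_density_cont_aux.comp (by fun_prop)).intervalIntegrable u v
  · exact cauchy_density_cont_aux.intervalIntegrable u v
  · intro t ht
    have h2 : (0:ℝ) < 1 + t ^ 2 := by positivity
    apply one_div_le_one_div_of_le h2
    nlinarith [ht.1]

open Real in
lemma arctan_gap (x : ℝ) (hx : 1 ≤ x) :
    0.05 * Real.log 4 ≤ x * (Real.arctan (4 * x) - Real.arctan (3 * x)) := by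
  have hx0 : (0:ℝ) < x := by linarith
  have key : ∀ c : ℝ, 3 ≤ c → (0.25 : ℝ) / (1 + c ^ 2) ≤ 0.25 * x / (1 + (c * x) ^ 2) * x := by
    intro c hc
    rw [div_mul_eq_mul_div, div_le_div_iff₀ (by positivity) (by positivity)]
    nlinarith [sq_nonneg c, sq_nonneg x]
  have h1 := arctan_step (3 * x) (3.25 * x) (by linarith) (by linarith)
  have h2 := arctan_step (3.25 * x) (3.5 * x) (by linarith) (by linarith)
  have h3 := arctan_step (3.5 * x) (3.75 * x) (by linarith) (by linarith)
  have h4 := arctan_step (3.75 * x) (4 * x) (by linarith) (by linarith)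
  have e1 : (3.25 * x - 3 * x) / (1 + (3.25 * x) ^ 2) = 0.25 * x / (1 + (3.25 * x) ^ 2) := by
    ring
  have e2 : (3.5 * x - 3.25 * x) / (1 + (3.5 * x) ^ 2) = 0.25 * x / (1 + (3.5 * x) ^ 2) := by
    ring
  have e3 : (3.75 * x - 3.5 * x) / (1 + (3.75 * x) ^ 2) = 0.25 * x / (1 + (3.75 * x) ^ 2) := by
    ring
  have e4 : (4 * x - 3.75 * x) / (1 + (4 * x) ^ 2) = 0.25 * x / (1 + (4 * x) ^ 2) := by
    ring
  have hsum : 0.25 * x / (1 + (3.25 * x) ^ 2) + 0.25 * x / (1 + (3.5 * x) ^ 2)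
      + 0.25 * x / (1 + (3.75 * x) ^ 2) + 0.25 * x / (1 + (4 * x) ^ 2)
      ≤ Real.arctan (4 * x) - Real.arctan (3 * x) := by
    rw [← e1, ← e2, ← e3, ← e4]
    linarith
  have hk1 := key 3.25 (by norm_num)
  have hk2 := key 3.5 (by norm_num)
  have hk3 := key 3.75 (by norm_num)
  have hk4 := key 4 (by norm_num)
  have hlog : Real.log 4 ≤ 1.3862943616 := by
    have h2 : Real.log 4 = 2 * Real.log 2 := by
      rw [show (4:ℝ) = 2 ^ 2 by norm_num, Real.log_pow]
      push_cast; ring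
    have := Real.log_two_lt_d9
    linarith
  have hnum : (0.05 : ℝ) * 1.3862943616
      ≤ 0.25 / (1 + (3.25:ℝ) ^ 2) + 0.25 / (1 + (3.5:ℝ) ^ 2)
        + 0.25 / (1 + (3.75:ℝ) ^ 2) + 0.25 / (1 + (4:ℝ) ^ 2) := by
    norm_num
  have hlog0 : (0:ℝ) ≤ Real.log 4 := Real.log_nonneg (by norm_num)
  have hfinal : x * (0.25 * x / (1 + (3.25 * x) ^ 2) + 0.25 * x / (1 + (3.5 * x) ^ 2)
      + 0.25 * x / (1 + (3.75 * x) ^ 2) + 0.25 * x / (1 + (4 * x) ^ 2))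
      ≤ x * (Real.arctan (4 * x) - Real.arctan (3 * x)) :=
    mul_le_mul_of_nonneg_left hsum hx0.le
  nlinarith [hk1, hk2, hk3, hk4, hfinal]

open Real MeasureTheory Set in
lemma pair_subset (x y a b : ℝ) (h0 : 0 < a) (hxa : x ≤ a) (hb4 : b ≤ 4 * x)
    (havoid : ∀ t : ℝ, a < t → t < b → ¬(y - x ≤ t ∧ t ≤ y + x)) :
    (Set.Ioo a b ∪ Set.Ioo (-b) (-a))
      ⊆ {z : ℝ | |z| ∈ Set.Ioc x (4 * x) ∧ |z| ∉ Set.Icc (y - x) (y + x)} := by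
  rintro z (⟨h1, h2⟩ | ⟨h1, h2⟩)
  · have hz : |z| = z := abs_of_pos (by linarith)
    refine ⟨?_, ?_⟩
    · rw [Set.mem_Ioc, hz]; exact ⟨by linarith, by linarith⟩
    · rw [Set.mem_Icc, hz]; exact havoid z h1 h2
  · have hz : |z| = -z := abs_of_neg (by linarith)
    refine ⟨?_, ?_⟩
    · rw [Set.mem_Ioc, hz]; exact ⟨by linarith, by linarith⟩
    · rw [Set.mem_Icc, hz]; exact havoid (-z) (by linarith) (by linarith)

open Real in
lemma target_le (x c : ℝ) (hx : 1 ≤ x)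
    (hc : Real.arctan (4 * x) - Real.arctan (3 * x) ≤ c) :
    0.1 / Real.pi * Real.log 4 / x ≤ 2 * c / Real.pi := by
  have hπ := Real.pi_pos
  have hx0 : (0:ℝ) < x := by linarith
  have hgap := arctan_gap x hx
  have h1 : x * (Real.arctan (4 * x) - Real.arctan (3 * x)) ≤ x * c :=
    mul_le_mul_of_nonneg_left hc hx0.le
  have h2 : 0.1 * Real.log 4 ≤ 2 * c * x := by nlinarith
  have e : 0.1 / Real.pi * Real.log 4 / x = 0.1 * Real.log 4 / (Real.pi * x) := by
    ring
  rw [e, div_le_div_iff₀ (by positivity) hπ]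
  nlinarith [mul_le_mul_of_nonneg_left h2 hπ.le]

/-- Anti-concentration of a standard Cauchy: for any x ≥ 1 and y > 0, with decent
probability |X| ∈ (x,4x] while avoiding the window [y-x, y+x]. -/
theorem stmt3 (x y : ℝ) (hx : 1 ≤ x) (hy : 0 < y) :
    ENNReal.ofReal (0.1 / Real.pi * Real.log 4 / x)
      ≤ cauchyMeasure
          {z : ℝ | |z| ∈ Set.Ioc x (4 * x) ∧ |z| ∉ Set.Icc (y - x) (y + x)} := by
  have hx0 : (0:ℝ) < x := by linarith
  set E := {z : ℝ | |z| ∈ Set.Ioc x (4 * x) ∧ |z| ∉ Set.Icc (y - x) (y + x)} with hE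
  rcases le_or_gt y (2 * x) with hA | hB
  · -- y ≤ 2x : use (3x, 4x)
    have hsub : (Set.Ioo (3 * x) (4 * x) ∪ Set.Ioo (-(4 * x)) (-(3 * x))) ⊆ E :=
      pair_subset x y (3 * x) (4 * x) (by linarith) (by linarith) le_rfl
        (fun t h1 h2 h => by linarith [h.2])
    calc ENNReal.ofReal (0.1 / Real.pi * Real.log 4 / x)
        ≤ ENNReal.ofReal (2 * (Real.arctan (4 * x) - Real.arctan (3 * x)) / Real.pi) :=
          ENNReal.ofReal_le_ofReal (target_le x _ hx le_rfl)
      _ ≤ cauchyMeasure (Set.Ioo (3 * x) (4 * x) ∪ Set.Ioo (-(4 * x)) (-(3 * x))) :=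
          cauchy_pair _ _ (by linarith) (by linarith)
      _ ≤ cauchyMeasure E := MeasureTheory.measure_mono hsub
  rcases le_or_gt (3 * x) y with hC | hB2
  · -- y ≥ 3x : use (x, 2x)
    have hsub : (Set.Ioo x (2 * x) ∪ Set.Ioo (-(2 * x)) (-x)) ⊆ E :=
      pair_subset x y x (2 * x) (by linarith) le_rfl (by linarith)
        (fun t h1 h2 h => by linarith [h.1])
    have hmono : Real.arctan (4 * x) - Real.arctan (3 * x)
        ≤ Real.arctan (2 * x) - Real.arctan x := by
      have h := arctan_shift x (2 * x) (2 * x) (by linarith) (by linarith) (by linarith)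
      have e1 : 2 * x + 2 * x = 4 * x := by ring
      have e2 : x + 2 * x = 3 * x := by ring
      rw [e1, e2] at h
      exact h
    calc ENNReal.ofReal (0.1 / Real.pi * Real.log 4 / x)
        ≤ ENNReal.ofReal (2 * (Real.arctan (2 * x) - Real.arctan x) / Real.pi) :=
          ENNReal.ofReal_le_ofReal (target_le x _ hx hmono)
      _ ≤ cauchyMeasure (Set.Ioo x (2 * x) ∪ Set.Ioo (-(2 * x)) (-x)) :=
          cauchy_pair _ _ (by linarith) (by linarith)
      _ ≤ cauchyMeasure E := MeasureTheory.measure_mono hsub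
  · -- 2x < y < 3x : use (x, y-x) and (y+x, 4x)
    set P1 := Set.Ioo x (y - x) ∪ Set.Ioo (-(y - x)) (-x) with hP1
    set P2 := Set.Ioo (y + x) (4 * x) ∪ Set.Ioo (-(4 * x)) (-(y + x)) with hP2
    have hsub1 : P1 ⊆ E :=
      pair_subset x y x (y - x) (by linarith) le_rfl (by linarith)
        (fun t h1 h2 h => by linarith [h.1])
    have hsub2 : P2 ⊆ E :=
      pair_subset x y (y + x) (4 * x) (by linarith) (by linarith) le_rfl
        (fun t h1 h2 h => by linarith [h.2])
    have hsub : P1 ∪ P2 ⊆ E := Set.union_subset hsub1 hsub2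
    have hdisj : Disjoint P1 P2 := by
      rw [Set.disjoint_left]
      rintro z (⟨h1, h2⟩ | ⟨h1, h2⟩) (⟨h3, h4⟩ | ⟨h3, h4⟩) <;> linarith
    have hmeas : MeasurableSet P2 := (measurableSet_Ioo).union measurableSet_Ioo
    have hshift : Real.arctan (y + x) - Real.arctan (y - x)
        ≤ Real.arctan (3 * x) - Real.arctan x := by
      have h := arctan_shift x (3 * x) (y - 2 * x) (by linarith) (by linarith) (by linarith)
      have e1 : 3 * x + (y - 2 * x) = y + x := by ring
      have e2 : x + (y - 2 * x) = y - x := by ring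
      rw [e1, e2] at h
      exact h
    have hc : Real.arctan (4 * x) - Real.arctan (3 * x)
        ≤ (Real.arctan (y - x) - Real.arctan x)
          + (Real.arctan (4 * x) - Real.arctan (y + x)) := by linarith
    have hr := target_le x _ hx hc
    calc ENNReal.ofReal (0.1 / Real.pi * Real.log 4 / x)
        ≤ ENNReal.ofReal (2 * ((Real.arctan (y - x) - Real.arctan x)
            + (Real.arctan (4 * x) - Real.arctan (y + x))) / Real.pi) :=
          ENNReal.ofReal_le_ofReal hr
      _ = ENNReal.ofReal (2 * (Real.arctan (y - x) - Real.arctan x) / Real.pi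
            + 2 * (Real.arctan (4 * x) - Real.arctan (y + x)) / Real.pi) := by ring_nf
      _ ≤ ENNReal.ofReal (2 * (Real.arctan (y - x) - Real.arctan x) / Real.pi)
            + ENNReal.ofReal (2 * (Real.arctan (4 * x) - Real.arctan (y + x)) / Real.pi) :=
          ENNReal.ofReal_add_le
      _ ≤ cauchyMeasure P1 + cauchyMeasure P2 :=
          add_le_add (cauchy_pair _ _ (by linarith) (by linarith))
            (cauchy_pair _ _ (by linarith) (by linarith))
      _ = cauchyMeasure (P1 ∪ P2) := (MeasureTheory.measure_union hdisj hmeas).symm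
      _ ≤ cauchyMeasure E := MeasureTheory.measure_mono hsub
end
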